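/- Let λ₂, λ₃ ≥ 0 with λ₂² + λ₃² = 1/2. The minimal control power of the maximal slice state, P = h((1 + √2·λ₂)/2), satisfies 0 ≤ P ≤ 1, with P = 1 iff λ₂ = 0 and P = 0 iff λ₃ = 0. -/

import Mathlib

noncomputable def binEnt (x : ℝ) : ℝ := -(x * Real.logb 2 x) - (1 - x) * Real.logb 2 (1 - x)

/-!
`binEnt` is Mathlib's `Real.binEntropy` measured in bits, so it lies in `[0, 1]` on `[0, 1]`,
equals `1` exactly at `1/2` and `0` exactly at `0` and `1`. For the maximal slice state the
argument is `(1 + a) / 2` with `a = √2 λ₂ ≥ 0` and `a² = 1 - 2λ₃²`, so `a ∈ [0, 1]`, with `a = 0`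
iff `λ₂ = 0` and `a = 1` iff `λ₃ = 0`.
-/

open Real

lemma binEnt_eq_binEntropy_div_log_two (x : ℝ) : binEnt x = binEntropy x / log 2 := by
  unfold binEnt binEntropy logb
  rw [log_inv, log_inv]
  ring

lemma binEnt_nonneg {x : ℝ} (hx₀ : 0 ≤ x) (hx₁ : x ≤ 1) : 0 ≤ binEnt x := by
  rw [binEnt_eq_binEntropy_div_log_two]
  exact div_nonneg (binEntropy_nonneg hx₀ hx₁) (log_nonneg one_le_two)

lemma binEnt_le_one (x : ℝ) : binEnt x ≤ 1 := by
  rw [binEnt_eq_binEntropy_div_log_two, div_le_one (log_pos one_lt_two)]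
  exact binEntropy_le_log_two

lemma binEnt_eq_one_iff {x : ℝ} : binEnt x = 1 ↔ x = 2⁻¹ := by
  rw [binEnt_eq_binEntropy_div_log_two, div_eq_one_iff_eq (log_pos one_lt_two).ne',
    binEntropy_eq_log_two]

lemma binEnt_eq_zero_iff {x : ℝ} : binEnt x = 0 ↔ x = 0 ∨ x = 1 := by
  rw [binEnt_eq_binEntropy_div_log_two, div_eq_zero_iff, binEntropy_eq_zero,
    or_iff_left (log_pos one_lt_two).ne']

lemma sq_sqrt_two_mul_of_sq_add_sq {l2 l3 : ℝ} (hnorm : l2 ^ 2 + l3 ^ 2 = 1 / 2) :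
    (√2 * l2) ^ 2 = 1 - 2 * l3 ^ 2 := by
  rw [mul_pow, sq_sqrt zero_le_two]
  linarith

theorem mcp_maximal_slice_general (l2 l3 : ℝ) (h2 : 0 ≤ l2)
    (hnorm : l2^2 + l3^2 = 1/2) :
    (0 ≤ binEnt ((1 + Real.sqrt 2 * l2) / 2) ∧ binEnt ((1 + Real.sqrt 2 * l2) / 2) ≤ 1) ∧
      (binEnt ((1 + Real.sqrt 2 * l2) / 2) = 1 ↔ l2 = 0) ∧
      (binEnt ((1 + Real.sqrt 2 * l2) / 2) = 0 ↔ l3 = 0) := by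
  have ha_sq := sq_sqrt_two_mul_of_sq_add_sq hnorm
  set a := √2 * l2
  have ha₀ : 0 ≤ a := mul_nonneg (sqrt_nonneg 2) h2
  have ha₁ : a ≤ 1 := by nlinarith [sq_nonneg l3]
  have ha_zero : a = 0 ↔ l2 = 0 := by simp [a]
  have ha_one : a = 1 ↔ l3 = 0 := by
    rw [← pow_eq_one_iff_of_nonneg ha₀ two_ne_zero, ha_sq]
    simp
  refine ⟨⟨binEnt_nonneg (by linarith) (by linarith), binEnt_le_one _⟩, ?_, ?_⟩
  · rw [binEnt_eq_one_iff, ← ha_zero]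
    constructor <;> intro h <;> linarith
  · rw [binEnt_eq_zero_iff, ← ha_one]
    constructor
    · rintro (h | h) <;> linarith
    · intro h; right; linarith

theorem mcp_maximal_slice (l2 l3 : ℝ) (h2 : 0 ≤ l2) (h3 : 0 ≤ l3)
    (hnorm : l2^2 + l3^2 = 1/2) :
    (0 ≤ binEnt ((1 + Real.sqrt 2 * l2) / 2) ∧ binEnt ((1 + Real.sqrt 2 * l2) / 2) ≤ 1) ∧
      (binEnt ((1 + Real.sqrt 2 * l2) / 2) = 1 ↔ l2 = 0) ∧
      (binEnt ((1 + Real.sqrt 2 * l2) / 2) = 0 ↔ l3 = 0) :=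
  mcp_maximal_slice_general l2 l3 h2 hnorm
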